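/- arXiv:0908.4003 — 3 statements merged into one kernel-verified Lean document; each statement's English description precedes it below -/
import Mathlib

section
/- Let s_n be the number of saturated secondary structures on [1,n] (with θ = 1, and s_0 = 0). Then the formal power series S(z) = Σ_{n≥1} s_n z^n ∈ ℚ[[z]] satisfies the cubic equation z⁴S³ + z²(z² − 2)S² + (1 − z²)S = z + z². -/
/-- A secondary structure on `[1,n]` with `θ = 1`: a finite set of base pairs `(i,j)`
with `1 ≤ i`, `i + 1 < j` (i.e. `i < j` and `j - i > 1`), `j ≤ n`, no shared endpoints,
and no crossings (pseudoknots). -/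
def IsSecStr (n : ℕ) (S : Finset (ℕ × ℕ)) : Prop :=
  (∀ p ∈ S, 1 ≤ p.1 ∧ p.1 + 1 < p.2 ∧ p.2 ≤ n) ∧
  (∀ p ∈ S, ∀ q ∈ S, p ≠ q →
    p.1 ≠ q.1 ∧ p.1 ≠ q.2 ∧ p.2 ≠ q.1 ∧ p.2 ≠ q.2) ∧
  (∀ p ∈ S, ∀ q ∈ S, ¬ (p.1 < q.1 ∧ q.1 < p.2 ∧ p.2 < q.2))

/-- A secondary structure on `[1,n]` is saturated if no base pair can be added
so that the result is still a secondary structure on `[1,n]`. -/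
def IsSaturated (n : ℕ) (S : Finset (ℕ × ℕ)) : Prop :=
  IsSecStr n S ∧ ∀ p : ℕ × ℕ, p ∉ S → ¬ IsSecStr n (insert p S)

/-- `S(z) = Σ_{n≥1} s_n zⁿ`, with `s_n` the number of saturated secondary structures
on `[1,n]` (θ = 1). -/
noncomputable def satGF : PowerSeries ℚ :=
  PowerSeries.mk fun n =>
    if n = 0 then 0 else (Set.ncard {S : Finset (ℕ × ℕ) | IsSaturated n S} : ℚ)

/-!
Call a saturated structure *tight* if every position lies under some arc. In a saturated
structure two uncovered positions `i`, `j ≥ i + 2` could be joined by a new arc, so the uncovered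
positions form one block of length `g ≤ 2`; cutting there leaves two tight structures, and
conversely two tight structures glued across a gap of length at most 2 form a saturated one.
Hence `S = P - 1 + (z + z²) P²`, where `P` counts tight structures. A nonempty tight structure
consists of its first arc `(1, j)`, a saturated structure on the `j - 2` positions below it and a
tight structure on the positions after `j`, so `P = 1 + z² S P`. Eliminating `P` gives the cubic.
-/

open Finset

def IsArc (n : ℕ) (p : ℕ × ℕ) : Prop := 1 ≤ p.1 ∧ p.1 + 1 < p.2 ∧ p.2 ≤ n

def Clash (p q : ℕ × ℕ) : Prop :=
  p.1 = q.1 ∨ p.1 = q.2 ∨ p.2 = q.1 ∨ p.2 = q.2 ∨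
    (p.1 < q.1 ∧ q.1 < p.2 ∧ p.2 < q.2) ∨ (q.1 < p.1 ∧ p.1 < q.2 ∧ q.2 < p.2)

lemma clash_comm {p q : ℕ × ℕ} : Clash p q ↔ Clash q p := by
  unfold Clash; omega

lemma isSecStr_iff {n : ℕ} {S : Finset (ℕ × ℕ)} :
    IsSecStr n S ↔ (∀ p ∈ S, IsArc n p) ∧ ∀ p ∈ S, ∀ q ∈ S, p ≠ q → ¬Clash p q := by
  refine ⟨fun ⟨hArc, hEnd, hCross⟩ => ⟨hArc, fun p hp q hq hpq => ?_⟩,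
    fun ⟨hArc, hClash⟩ => ⟨hArc, fun p hp q hq hpq => ?_, fun p hp q hq => ?_⟩⟩
  · have := hEnd p hp q hq hpq
    have := hCross p hp q hq
    have := hCross q hq p hp
    unfold Clash; omega
  · have := hClash p hp q hq hpq
    unfold Clash at this; omega
  · by_cases hpq : p = q
    · subst hpq; omega
    · have := hClash p hp q hq hpq
      unfold Clash at this; omega

lemma isSecStr_insert_iff {n : ℕ} {S : Finset (ℕ × ℕ)} {p : ℕ × ℕ} (hp : p ∉ S) :
    IsSecStr n (insert p S) ↔ IsArc n p ∧ IsSecStr n S ∧ ∀ q ∈ S, ¬Clash p q := by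
  have hne : ∀ q ∈ S, p ≠ q := fun q hq h => hp (h ▸ hq)
  simp only [isSecStr_iff, forall_mem_insert, ne_eq, not_true_eq_false, IsEmpty.forall_iff,
    true_and]
  constructor
  · rintro ⟨⟨hpa, hSa⟩, hpS, hSp⟩
    exact ⟨hpa, ⟨hSa, fun q hq => (hSp q hq).2⟩, fun q hq => hpS q hq (hne q hq)⟩
  · rintro ⟨hpa, ⟨hSa, hSS⟩, hpS⟩
    exact ⟨⟨hpa, hSa⟩, fun q hq _ => hpS q hq,
      fun q hq => ⟨fun _ h => hpS q hq (clash_comm.1 h), hSS q hq⟩⟩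

lemma isSaturated_iff {n : ℕ} {S : Finset (ℕ × ℕ)} :
    IsSaturated n S ↔ IsSecStr n S ∧ ∀ p, IsArc n p → p ∉ S → ∃ q ∈ S, Clash p q := by
  refine and_congr_right fun hS => forall_congr' fun p => ?_
  by_cases hp : p ∈ S
  · simp [hp]
  · simp [isSecStr_insert_iff hp, hS, hp]

lemma IsSecStr.mono {m n : ℕ} {S : Finset (ℕ × ℕ)} (hS : IsSecStr m S) (h : m ≤ n) :
    IsSecStr n S :=
  ⟨fun p hp => ⟨(hS.1 p hp).1, (hS.1 p hp).2.1, (hS.1 p hp).2.2.trans h⟩, hS.2⟩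

lemma IsSaturated.exists_clash {n : ℕ} {S : Finset (ℕ × ℕ)} {p : ℕ × ℕ} (hS : IsSaturated n S)
    (hp : IsArc n p) (hpS : p ∉ S) : ∃ q ∈ S, Clash p q :=
  (isSaturated_iff.1 hS).2 p hp hpS

def Covers (S : Finset (ℕ × ℕ)) (i : ℕ) : Prop := ∃ p ∈ S, p.1 ≤ i ∧ i ≤ p.2

lemma covers_union {T V : Finset (ℕ × ℕ)} {i : ℕ} :
    Covers (T ∪ V) i ↔ Covers T i ∨ Covers V i := by
  simp only [Covers, mem_union, or_and_right, exists_or]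

lemma IsSaturated.covers_or_covers {n i j : ℕ} {S : Finset (ℕ × ℕ)} (hS : IsSaturated n S)
    (hi : 1 ≤ i) (hij : i + 1 < j) (hj : j ≤ n) : Covers S i ∨ Covers S j := by
  by_contra! h
  have hij_notMem : (i, j) ∉ S := fun hmem => h.1 ⟨_, hmem, le_rfl, by omega⟩
  obtain ⟨q, hq, hclash⟩ := hS.exists_clash ⟨hi, hij, hj⟩ hij_notMem
  have hi' : ¬(q.1 ≤ i ∧ i ≤ q.2) := fun hc => h.1 ⟨q, hq, hc⟩
  have hj' : ¬(q.1 ≤ j ∧ j ≤ q.2) := fun hc => h.2 ⟨q, hq, hc⟩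
  have := hS.1.1 q hq
  unfold Clash at hclash; omega

def shiftArc (c : ℕ) : ℕ × ℕ ↪ ℕ × ℕ := (addRightEmbedding c).prodMap (addRightEmbedding c)

def shift (c : ℕ) (U : Finset (ℕ × ℕ)) : Finset (ℕ × ℕ) := U.map (shiftArc c)

lemma mem_shift {c : ℕ} {U : Finset (ℕ × ℕ)} {q : ℕ × ℕ} :
    q ∈ shift c U ↔ ∃ p ∈ U, (p.1 + c, p.2 + c) = q := by
  simp [shift, shiftArc, Prod.ext_iff]

lemma add_mem_shift {c : ℕ} {U : Finset (ℕ × ℕ)} {p : ℕ × ℕ} :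
    (p.1 + c, p.2 + c) ∈ shift c U ↔ p ∈ U :=
  mem_map' (shiftArc c)

lemma pair_sub_add_cancel {c : ℕ} {q : ℕ × ℕ} (h1 : c ≤ q.1) (h2 : c ≤ q.2) :
    (q.1 - c + c, q.2 - c + c) = q :=
  Prod.ext (Nat.sub_add_cancel h1) (Nat.sub_add_cancel h2)

lemma shift_zero (U : Finset (ℕ × ℕ)) : shift 0 U = U := by
  ext q; simp [mem_shift]

lemma clash_add {p q : ℕ × ℕ} {c : ℕ} :
    Clash (p.1 + c, p.2 + c) (q.1 + c, q.2 + c) ↔ Clash p q := by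
  unfold Clash; omega

lemma covers_shift {c i : ℕ} {U : Finset (ℕ × ℕ)} :
    Covers (shift c U) i ↔ c ≤ i ∧ Covers U (i - c) := by
  simp only [Covers, mem_shift]
  constructor
  · rintro ⟨_, ⟨p, hp, rfl⟩, h1, h2⟩
    exact ⟨by omega, p, hp, by omega, by omega⟩
  · rintro ⟨hc, p, hp, h1, h2⟩
    exact ⟨_, ⟨p, hp, rfl⟩, by omega, by omega⟩

lemma IsSecStr.shift {m n c : ℕ} {U : Finset (ℕ × ℕ)} (hU : IsSecStr m U) (h : c + m ≤ n) :
    IsSecStr n (shift c U) := by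
  rw [isSecStr_iff] at hU ⊢
  refine ⟨fun q hq => ?_, fun q hq q' hq' hne => ?_⟩
  · obtain ⟨p, hp, rfl⟩ := mem_shift.1 hq
    have := hU.1 p hp
    unfold IsArc at this ⊢; omega
  · obtain ⟨p, hp, rfl⟩ := mem_shift.1 hq
    obtain ⟨p', hp', rfl⟩ := mem_shift.1 hq'
    rw [clash_add]
    exact hU.2 p hp p' hp' fun h => hne (h ▸ rfl)

lemma IsSecStr.union {n : ℕ} {T V : Finset (ℕ × ℕ)} (hT : IsSecStr n T) (hV : IsSecStr n V)
    (hTV : ∀ p ∈ T, ∀ q ∈ V, p.2 < q.1) : IsSecStr n (T ∪ V) := by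
  rw [isSecStr_iff] at hT hV ⊢
  refine ⟨fun p hp => (mem_union.1 hp).elim (hT.1 p) (hV.1 p), fun p hp q hq hne => ?_⟩
  rcases mem_union.1 hp with hp | hp <;> rcases mem_union.1 hq with hq | hq
  · exact hT.2 p hp q hq hne
  · have := hT.1 p hp; have := hV.1 q hq; have := hTV p hp q hq
    unfold IsArc at *; unfold Clash; omega
  · have := hV.1 p hp; have := hT.1 q hq; have := hTV q hq p hp
    unfold IsArc at *; unfold Clash; omega
  · exact hV.2 p hp q hq hne

/-- The arcs of `S` inside `[c + 1, c + m]`, translated to `[1, m]`. -/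
noncomputable def window (c m : ℕ) (S : Finset (ℕ × ℕ)) : Finset (ℕ × ℕ) :=
  (S.preimage (shiftArc c) (shiftArc c).injective.injOn).filter fun p => 1 ≤ p.1 ∧ p.2 ≤ m

lemma mem_window {c m : ℕ} {S : Finset (ℕ × ℕ)} {p : ℕ × ℕ} :
    p ∈ window c m S ↔ (p.1 + c, p.2 + c) ∈ S ∧ 1 ≤ p.1 ∧ p.2 ≤ m := by
  simp [window, shiftArc, Prod.map]

lemma mem_window_of_mem {c m : ℕ} {S : Finset (ℕ × ℕ)} {q : ℕ × ℕ} (hq : q ∈ S) (h1 : c < q.1)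
    (h12 : q.1 ≤ q.2) (h2 : q.2 ≤ c + m) : (q.1 - c, q.2 - c) ∈ window c m S := by
  refine mem_window.2 ⟨?_, by dsimp; omega, by dsimp; omega⟩
  rwa [pair_sub_add_cancel h1.le (h1.le.trans h12)]

lemma shift_window {n c m : ℕ} {S : Finset (ℕ × ℕ)} (hS : IsSecStr n S) :
    shift c (window c m S) = S.filter fun q => c < q.1 ∧ q.2 ≤ c + m := by
  ext q
  rw [mem_shift, mem_filter]
  constructor
  · rintro ⟨p, hp, rfl⟩
    obtain ⟨hp, h1, h2⟩ := mem_window.1 hp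
    exact ⟨hp, by omega, by omega⟩
  · rintro ⟨hq, h1, h2⟩
    have := hS.1 q hq
    exact ⟨_, mem_window_of_mem hq h1 (by omega) h2, pair_sub_add_cancel h1.le (by omega)⟩

lemma window_union_shift {m c : ℕ} {U V : Finset (ℕ × ℕ)} (hU : IsSecStr m U)
    (hV : ∀ q ∈ V, ¬(c < q.1 ∧ q.2 ≤ c + m)) : window c m (V ∪ shift c U) = U := by
  ext p
  simp only [mem_window, mem_union, add_mem_shift]
  constructor
  · rintro ⟨hp | hp, h1, h2⟩
    · exact absurd ⟨by omega, by omega⟩ (hV _ hp)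
    · exact hp
  · intro hp
    exact ⟨Or.inr hp, (hU.1 p hp).1, (hU.1 p hp).2.2⟩

def IsTight (n : ℕ) (S : Finset (ℕ × ℕ)) : Prop :=
  IsSaturated n S ∧ ∀ i, 1 ≤ i → i ≤ n → Covers S i

lemma IsTight.covers_iff {n i : ℕ} {T : Finset (ℕ × ℕ)} (hT : IsTight n T) :
    Covers T i ↔ 1 ≤ i ∧ i ≤ n := by
  refine ⟨fun ⟨p, hp, h1, h2⟩ => ?_, fun h => hT.2 i h.1 h.2⟩
  have := hT.1.1.1 p hp
  omega

lemma covers_union_shift {a b c i : ℕ} {T U : Finset (ℕ × ℕ)} (hT : IsTight a T)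
    (hU : IsTight b U) : Covers (T ∪ shift c U) i ↔ (1 ≤ i ∧ i ≤ a) ∨ (c < i ∧ i ≤ c + b) := by
  rw [covers_union, covers_shift, hT.covers_iff, hU.covers_iff]
  omega

lemma IsSaturated.exists_clash_of_shift_subset {m c : ℕ} {U X : Finset (ℕ × ℕ)} {p : ℕ × ℕ}
    (hU : IsSaturated m U) (hX : shift c U ⊆ X) (hp : IsArc (c + m) p) (hcp : c < p.1)
    (hpX : p ∉ X) : ∃ q ∈ X, Clash p q := by
  have hp_eq := pair_sub_add_cancel (q := p) hcp.le (by unfold IsArc at hp; omega)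
  obtain ⟨q, hq, hclash⟩ := hU.exists_clash (p := (p.1 - c, p.2 - c))
    (by unfold IsArc at *; dsimp; omega)
    fun h => hpX (hX (hp_eq ▸ add_mem_shift.2 h))
  refine ⟨(q.1 + c, q.2 + c), hX (add_mem_shift.2 hq), ?_⟩
  rw [← hp_eq]
  exact clash_add.2 hclash

lemma isSaturated_union_shift {a b g : ℕ} {T U : Finset (ℕ × ℕ)} (hg : g ≤ 2)
    (hT : IsTight a T) (hU : IsTight b U) : IsSaturated (a + g + b) (T ∪ shift (a + g) U) := by
  have hsec : IsSecStr (a + g + b) (T ∪ shift (a + g) U) :=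
    (hT.1.1.mono (by omega)).union (hU.1.1.shift le_rfl) fun p hp q hq => by
      obtain ⟨r, hr, rfl⟩ := mem_shift.1 hq
      have := hT.1.1.1 p hp
      have := hU.1.1.1 r hr
      dsimp; omega
  refine isSaturated_iff.2 ⟨hsec, fun p hp hpX => ?_⟩
  have := hp
  unfold IsArc at this
  by_cases hpa : p.2 ≤ a
  · obtain ⟨q, hq, hclash⟩ := hT.1.exists_clash ⟨hp.1, hp.2.1, hpa⟩
      fun h => hpX (mem_union_left _ h)
    exact ⟨q, mem_union_left _ hq, hclash⟩
  by_cases hpb : a + g < p.1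
  · exact hU.1.exists_clash_of_shift_subset subset_union_right hp hpb hpX
  -- `p` straddles the gap, which is too short to hold both of its ends
  by_cases hx : p.1 ≤ a
  · obtain ⟨q, hq, h1, h2⟩ := hT.2 p.1 hp.1 hx
    have := hT.1.1.1 q hq
    exact ⟨q, mem_union_left _ hq, by unfold Clash; omega⟩
  · obtain ⟨r, hr, h1, h2⟩ := hU.2 (p.2 - (a + g)) (by omega) (by omega)
    exact ⟨(r.1 + (a + g), r.2 + (a + g)), mem_union_right _ (add_mem_shift.2 hr),
      by unfold Clash; dsimp; omega⟩

lemma isTight_union_shift {a b : ℕ} {T U : Finset (ℕ × ℕ)} (hT : IsTight a T)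
    (hU : IsTight b U) : IsTight (a + b) (T ∪ shift a U) := by
  refine ⟨by simpa using isSaturated_union_shift (g := 0) (by omega) hT hU, fun i h1 h2 => ?_⟩
  rw [covers_union_shift hT hU]
  omega

def wrap (k : ℕ) (I : Finset (ℕ × ℕ)) : Finset (ℕ × ℕ) := insert (1, k + 2) (shift 1 I)

lemma isTight_wrap {k : ℕ} {I : Finset (ℕ × ℕ)} (hk : 1 ≤ k) (hI : IsSaturated k I) :
    IsTight (k + 2) (wrap k I) := by
  have hinside : ∀ q ∈ shift 1 I, 1 < q.1 ∧ q.1 < q.2 ∧ q.2 < k + 2 := fun q hq => by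
    obtain ⟨p, hp, rfl⟩ := mem_shift.1 hq
    have := hI.1.1 p hp
    dsimp; omega
  have hnot : (1, k + 2) ∉ shift 1 I := fun h => by
    have := hinside _ h
    dsimp at this; omega
  have hsec : IsSecStr (k + 2) (wrap k I) := (isSecStr_insert_iff hnot).2
    ⟨⟨le_rfl, by omega, le_rfl⟩, hI.1.shift (by omega), fun q hq => by
      have := hinside q hq
      unfold Clash; dsimp; omega⟩
  refine ⟨isSaturated_iff.2 ⟨hsec, fun p hp hpW => ?_⟩,
    fun i h1 h2 => ⟨_, mem_insert_self _ _, h1, h2⟩⟩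
  have := hp
  unfold IsArc at this
  by_cases hin : 1 < p.1 ∧ p.2 < k + 2
  · exact hI.exists_clash_of_shift_subset (subset_insert _ _) ⟨by omega, by omega, by omega⟩
      hin.1 hpW
  · exact ⟨_, mem_insert_self _ _, by unfold Clash; dsimp; omega⟩

lemma isTight_wrap_union_shift {k b : ℕ} {I R : Finset (ℕ × ℕ)} (hk : 1 ≤ k)
    (hI : IsSaturated k I) (hR : IsTight b R) :
    IsTight (k + 2 + b) (wrap k I ∪ shift (k + 2) R) :=
  isTight_union_shift (isTight_wrap hk hI) hR

lemma isSaturated_window {n c m : ℕ} {S : Finset (ℕ × ℕ)} (hS : IsSaturated n S)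
    (hcm : c + m ≤ n)
    (hiso : ∀ q ∈ S, ∀ p, IsArc m p → Clash (p.1 + c, p.2 + c) q → c < q.1 ∧ q.2 ≤ c + m) :
    IsSaturated m (window c m S) := by
  have hS' := isSecStr_iff.1 hS.1
  have hsec : IsSecStr m (window c m S) := by
    refine isSecStr_iff.2 ⟨fun p hp => ?_, fun p hp q hq hne => ?_⟩
    · obtain ⟨hpS, h1, h2⟩ := mem_window.1 hp
      have := hS'.1 _ hpS
      unfold IsArc at *; dsimp at this; omega
    · refine fun hclash => hS'.2 _ (mem_window.1 hp).1 _ (mem_window.1 hq).1 ?_ (clash_add.2 hclash)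
      simpa [Prod.ext_iff] using fun h1 h2 => hne (Prod.ext h1 h2)
  refine isSaturated_iff.2 ⟨hsec, fun p hp hpW => ?_⟩
  have hpS : (p.1 + c, p.2 + c) ∉ S := fun h => hpW (mem_window.2 ⟨h, hp.1, hp.2.2⟩)
  obtain ⟨q, hq, hclash⟩ := hS.exists_clash (by unfold IsArc at *; dsimp; omega) hpS
  obtain ⟨h1, h2⟩ := hiso q hq p hp hclash
  have := hS.1.1 q hq
  refine ⟨_, mem_window_of_mem hq h1 (by omega) h2, ?_⟩
  rw [← pair_sub_add_cancel h1.le (by omega : c ≤ q.2)] at hclash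
  exact clash_add.1 hclash

lemma isTight_window {c m : ℕ} {S : Finset (ℕ × ℕ)} (hW : IsSaturated m (window c m S))
    (hcov : ∀ i, 1 ≤ i → i ≤ m → ∃ q ∈ S, c < q.1 ∧ q.2 ≤ c + m ∧ q.1 ≤ c + i ∧ c + i ≤ q.2) :
    IsTight m (window c m S) := by
  refine ⟨hW, fun i h1 h2 => ?_⟩
  obtain ⟨q, hq, hq1, hq2, hi1, hi2⟩ := hcov i h1 h2
  exact ⟨_, mem_window_of_mem hq hq1 (by omega) hq2, by dsimp; omega, by dsimp; omega⟩

lemma eq_shift_window_union {n c m c' m' : ℕ} {S : Finset (ℕ × ℕ)} (hS : IsSecStr n S)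
    (h : ∀ q ∈ S, (c < q.1 ∧ q.2 ≤ c + m) ∨ (c' < q.1 ∧ q.2 ≤ c' + m')) :
    S = shift c (window c m S) ∪ shift c' (window c' m' S) := by
  rw [shift_window hS, shift_window hS, ← filter_or, filter_true_of_mem h]

open Classical in
noncomputable def uncovered (n : ℕ) (S : Finset (ℕ × ℕ)) : Finset ℕ :=
  {i ∈ Icc 1 n | ¬Covers S i}

lemma mem_uncovered {n i : ℕ} {S : Finset (ℕ × ℕ)} :
    i ∈ uncovered n S ↔ 1 ≤ i ∧ i ≤ n ∧ ¬Covers S i := by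
  simp [uncovered, and_assoc]

lemma uncovered_union_shift {a b g : ℕ} {T U : Finset (ℕ × ℕ)} (hT : IsTight a T)
    (hU : IsTight b U) : uncovered (a + g + b) (T ∪ shift (a + g) U) = Ioc a (a + g) := by
  ext i
  rw [mem_uncovered, covers_union_shift hT hU, mem_Ioc]
  omega

lemma IsSaturated.exists_uncovered_eq_Ioc {n : ℕ} {S : Finset (ℕ × ℕ)} (hS : IsSaturated n S) :
    ∃ a g, g ≤ 2 ∧ a + g ≤ n ∧ uncovered n S = Ioc a (a + g) := by
  rcases (uncovered n S).eq_empty_or_nonempty with h | h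
  · exact ⟨0, 0, le_of_lt two_pos, Nat.zero_le _, by simp [h]⟩
  set i := (uncovered n S).min' h
  have hi := mem_uncovered.1 (min'_mem _ h)
  have hle : ∀ j ∈ uncovered n S, i ≤ j ∧ j ≤ i + 1 := fun j hj => by
    have hj' := mem_uncovered.1 hj
    refine ⟨min'_le _ _ hj, not_lt.1 fun hlt => ?_⟩
    rcases hS.covers_or_covers hi.1 hlt hj'.2.1 with hc | hc
    exacts [hi.2.2 hc, hj'.2.2 hc]
  by_cases hi1 : i + 1 ∈ uncovered n S
  · refine ⟨i - 1, 2, le_rfl, by have := (mem_uncovered.1 hi1).2.1; omega, ?_⟩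
    ext j
    rw [mem_Ioc]
    refine ⟨fun hj => by have := hle j hj; omega, fun hj => ?_⟩
    rcases (by omega : j = i ∨ j = i + 1) with rfl | rfl
    exacts [min'_mem _ h, hi1]
  · refine ⟨i - 1, 1, by omega, by omega, ?_⟩
    ext j
    rw [mem_Ioc]
    refine ⟨fun hj => ?_, fun hj => ?_⟩
    · have := hle j hj
      have : j ≠ i + 1 := fun h => hi1 (h ▸ hj)
      omega
    · rw [(by omega : j = i)]
      exact min'_mem _ h

lemma IsSaturated.split_at_uncovered {a g b : ℕ} {S : Finset (ℕ × ℕ)}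
    (hS : IsSaturated (a + g + b) S) (hg : 1 ≤ g)
    (hunc : uncovered (a + g + b) S = Ioc a (a + g)) :
    IsTight a (window 0 a S) ∧ IsTight b (window (a + g) b S) ∧
      S = window 0 a S ∪ shift (a + g) (window (a + g) b S) := by
  have hsplit : ∀ q ∈ S, q.2 ≤ a ∨ a + g < q.1 := fun q hq => by
    by_contra! h
    have hqa := hS.1.1 q hq
    have hmem : max q.1 (a + 1) ∈ uncovered (a + g + b) S := by
      rw [hunc, mem_Ioc]; omega
    exact (mem_uncovered.1 hmem).2.2 ⟨q, hq, by omega, by omega⟩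
  have hcov : ∀ i, 1 ≤ i → i ≤ a + g + b → i ∉ Ioc a (a + g) → Covers S i := fun i h1 h2 hi =>
    not_not.1 fun hc => hi (hunc ▸ mem_uncovered.2 ⟨h1, h2, hc⟩)
  have hL : IsSaturated a (window 0 a S) := isSaturated_window hS (by omega)
    fun q hq p hp hclash => by
      have := hS.1.1 q hq
      rcases hsplit q hq with h | h <;> unfold IsArc Clash at * <;> dsimp at * <;> omega
  have hR : IsSaturated b (window (a + g) b S) := isSaturated_window hS le_rfl
    fun q hq p hp hclash => by
      have := hS.1.1 q hq
      rcases hsplit q hq with h | h <;> unfold IsArc Clash at * <;> dsimp at * <;> omega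
  refine ⟨isTight_window hL fun i h1 h2 => ?_, isTight_window hR fun i h1 h2 => ?_, ?_⟩
  · obtain ⟨q, hq, hq1, hq2⟩ := hcov i h1 (by omega) (by rw [mem_Ioc]; omega)
    have := hS.1.1 q hq
    exact ⟨q, hq, by omega, by rcases hsplit q hq with h | h <;> omega, by omega, by omega⟩
  · obtain ⟨q, hq, hq1, hq2⟩ := hcov (a + g + i) (by omega) (by omega) (by rw [mem_Ioc]; omega)
    have := hS.1.1 q hq
    exact ⟨q, hq, by rcases hsplit q hq with h | h <;> omega, by omega, by omega, by omega⟩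
  · conv_rhs => rw [← shift_zero (window 0 a S)]
    refine eq_shift_window_union hS.1 fun q hq => ?_
    have := hS.1.1 q hq
    rcases hsplit q hq with h | h <;> omega

lemma IsTight.split_at_first_arc {k b : ℕ} {S : Finset (ℕ × ℕ)} (hS : IsTight (k + 2 + b) S)
    (h1 : (1, k + 2) ∈ S) :
    IsSaturated k (window 1 k S) ∧ IsTight b (window (k + 2) b S) ∧
      S = wrap k (window 1 k S) ∪ shift (k + 2) (window (k + 2) b S) := by
  have hsplit : ∀ q ∈ S, (q.1 = 1 ∧ q.2 = k + 2) ∨ (1 < q.1 ∧ q.2 < k + 2) ∨ k + 2 < q.1 :=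
    fun q hq => by
      by_cases hq1 : q = (1, k + 2)
      · exact Or.inl (Prod.ext_iff.1 hq1)
      have hclash := (isSecStr_iff.1 hS.1.1).2 q hq _ h1 hq1
      have := hS.1.1.1 q hq
      unfold Clash at hclash; dsimp at hclash; omega
  have hI : IsSaturated k (window 1 k S) := isSaturated_window hS.1 (by omega)
    fun q hq p hp hclash => by
      have := hS.1.1.1 q hq
      rcases hsplit q hq with h | h | h <;> unfold IsArc Clash at * <;> dsimp at * <;> omega
  have hR : IsSaturated b (window (k + 2) b S) := isSaturated_window hS.1 le_rfl
    fun q hq p hp hclash => by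
      have := hS.1.1.1 q hq
      rcases hsplit q hq with h | h | h <;> unfold IsArc Clash at * <;> dsimp at * <;> omega
  refine ⟨hI, isTight_window hR fun i hi1 hi2 => ?_, ?_⟩
  · obtain ⟨q, hq, hq1, hq2⟩ := hS.2 (k + 2 + i) (by omega) (by omega)
    have := hS.1.1.1 q hq
    exact ⟨q, hq, by rcases hsplit q hq with h | h | h <;> omega, by omega, hq1, hq2⟩
  · rw [wrap, insert_union, shift_window hS.1.1, shift_window hS.1.1, ← filter_or]
    ext q
    rw [mem_insert, mem_filter]
    constructor
    · intro hq
      have := hS.1.1.1 q hq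
      rcases hsplit q hq with h | h | h
      · exact Or.inl (Prod.ext h.1 h.2)
      · exact Or.inr ⟨hq, Or.inl ⟨h.1, by omega⟩⟩
      · exact Or.inr ⟨hq, Or.inr ⟨h, by omega⟩⟩
    · rintro (rfl | ⟨hq, -⟩)
      exacts [h1, hq]

lemma windows_union_shift {a b c : ℕ} {T U : Finset (ℕ × ℕ)} (hT : IsSecStr a T)
    (hU : IsSecStr b U) (hac : a ≤ c) :
    window 0 a (T ∪ shift c U) = T ∧ window c b (T ∪ shift c U) = U := by
  constructor
  · have := window_union_shift (c := 0) (V := shift c U) hT fun q hq => by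
      obtain ⟨p, hp, rfl⟩ := mem_shift.1 hq
      have := hU.1 p hp
      dsimp; omega
    rwa [shift_zero, union_comm] at this
  · exact window_union_shift hU fun q hq => by
      have := hT.1 q hq
      omega

lemma windows_wrap_union_shift {k b : ℕ} {I R : Finset (ℕ × ℕ)} (hk : 1 ≤ k)
    (hI : IsSaturated k I) (hR : IsSecStr b R) :
    window 1 k (wrap k I ∪ shift (k + 2) R) = I ∧
      window (k + 2) b (wrap k I ∪ shift (k + 2) R) = R := by
  refine ⟨?_, (windows_union_shift (isTight_wrap hk hI).1.1 hR le_rfl).2⟩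
  rw [wrap, insert_union, union_comm, ← insert_union]
  refine window_union_shift hI.1 fun q hq => ?_
  rcases mem_insert.1 hq with rfl | hq
  · omega
  · obtain ⟨p, hp, rfl⟩ := mem_shift.1 hq
    have := hR.1 p hp
    dsimp; omega

lemma eq_of_mem_wrap_union_shift {k j : ℕ} {I R : Finset (ℕ × ℕ)} (hI : IsSecStr k I)
    (h : (1, j) ∈ wrap k I ∪ shift (k + 2) R) : j = k + 2 := by
  rcases mem_union.1 h with h | h
  · rcases mem_insert.1 h with h | h
    · exact (Prod.ext_iff.1 h).2
    · obtain ⟨p, hp, hpj⟩ := mem_shift.1 h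
      have := hI.1 p hp
      have := (Prod.ext_iff.1 hpj).1
      dsimp at this; omega
  · obtain ⟨p, hp, hpj⟩ := mem_shift.1 h
    have := (Prod.ext_iff.1 hpj).1
    dsimp at this; omega

open Classical in
noncomputable def saturatedFinset (n : ℕ) : Finset (Finset (ℕ × ℕ)) :=
  {S ∈ (range (n + 1) ×ˢ range (n + 1)).powerset | IsSaturated n S}

open Classical in
noncomputable def tightFinset (n : ℕ) : Finset (Finset (ℕ × ℕ)) :=
  {S ∈ saturatedFinset n | IsTight n S}

lemma mem_saturatedFinset {n : ℕ} {S : Finset (ℕ × ℕ)} :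
    S ∈ saturatedFinset n ↔ IsSaturated n S := by
  simp only [saturatedFinset, mem_filter, mem_powerset, and_iff_right_iff_imp]
  intro hS p hp
  have := hS.1.1 p hp
  simp only [mem_product, mem_range]
  omega

lemma mem_tightFinset {n : ℕ} {S : Finset (ℕ × ℕ)} : S ∈ tightFinset n ↔ IsTight n S := by
  simp only [tightFinset, mem_filter, mem_saturatedFinset, and_iff_right_iff_imp]
  exact fun h => h.1

lemma card_tightFinset_add_three (n : ℕ) :
    #(tightFinset (n + 3)) =
      ∑ x ∈ antidiagonal n, #(saturatedFinset (x.1 + 1)) * #(tightFinset x.2) := by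
  simp_rw [← card_product]
  rw [← card_sigma]
  symm
  refine card_bij (fun y _ => wrap (y.1.1 + 1) y.2.1 ∪ shift (y.1.1 + 1 + 2) y.2.2) ?_ ?_ ?_
  · rintro ⟨⟨m, b⟩, I, R⟩ hy
    simp only [mem_sigma, HasAntidiagonal.mem_antidiagonal, mem_product, mem_saturatedFinset,
      mem_tightFinset] at hy
    rw [mem_tightFinset, ← hy.1, (by omega : m + b + 3 = m + 1 + 2 + b)]
    exact isTight_wrap_union_shift (Nat.succ_pos _) hy.2.1 hy.2.2
  · rintro ⟨⟨m, b⟩, I, R⟩ hy ⟨⟨m', b'⟩, I', R'⟩ hy' heq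
    simp only [mem_sigma, HasAntidiagonal.mem_antidiagonal, mem_product, mem_saturatedFinset,
      mem_tightFinset] at hy hy'
    dsimp only at heq
    obtain rfl : m = m' := by
      have h1 : (1, m + 1 + 2) ∈ wrap (m' + 1) I' ∪ shift (m' + 1 + 2) R' :=
        heq ▸ mem_union_left _ (mem_insert_self _ _)
      have := eq_of_mem_wrap_union_shift hy'.2.1.1 h1
      omega
    obtain rfl : b = b' := by omega
    have h := windows_wrap_union_shift (Nat.succ_pos m) hy.2.1 hy.2.2.1.1
    have h' := windows_wrap_union_shift (Nat.succ_pos m) hy'.2.1 hy'.2.2.1.1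
    rw [heq] at h
    rw [← h.1, ← h.2, h'.1, h'.2]
  · intro S hS
    rw [mem_tightFinset] at hS
    obtain ⟨q, hq, hq1, hq2⟩ := hS.2 1 le_rfl (by omega)
    have := hS.1.1.1 q hq
    obtain ⟨m, hm⟩ : ∃ m, q.2 = m + 1 + 2 := ⟨q.2 - 3, by omega⟩
    obtain ⟨b, hb⟩ : ∃ b, n + 3 = m + 1 + 2 + b := ⟨n + 3 - q.2, by omega⟩
    have h1 : (1, m + 1 + 2) ∈ S := by
      rw [← hm, (by omega : 1 = q.1)]
      exact hq
    rw [hb] at hS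
    obtain ⟨hI, hR, hS_eq⟩ := hS.split_at_first_arc h1
    exact ⟨⟨(m, b), window 1 (m + 1) S, window (m + 1 + 2) b S⟩,
      mem_sigma.2 ⟨HasAntidiagonal.mem_antidiagonal.2 (show m + b = n by omega),
        mem_product.2 ⟨mem_saturatedFinset.2 hI, mem_tightFinset.2 hR⟩⟩, hS_eq.symm⟩

lemma card_filter_card_uncovered (m g : ℕ) (hg1 : 1 ≤ g) (hg2 : g ≤ 2) :
    #{S ∈ saturatedFinset (m + g) | #(uncovered (m + g) S) = g} =
      ∑ x ∈ antidiagonal m, #(tightFinset x.1) * #(tightFinset x.2) := by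
  simp_rw [← card_product]
  rw [← card_sigma]
  symm
  refine card_bij (fun y _ => y.2.1 ∪ shift (y.1.1 + g) y.2.2) ?_ ?_ ?_
  · rintro ⟨⟨a, b⟩, T, U⟩ hy
    simp only [mem_sigma, HasAntidiagonal.mem_antidiagonal, mem_product, mem_tightFinset] at hy
    rw [mem_filter, mem_saturatedFinset, ← hy.1, (by omega : a + b + g = a + g + b),
      uncovered_union_shift hy.2.1 hy.2.2, Nat.card_Ioc]
    exact ⟨isSaturated_union_shift hg2 hy.2.1 hy.2.2, by omega⟩
  · rintro ⟨⟨a, b⟩, T, U⟩ hy ⟨⟨a', b'⟩, T', U'⟩ hy' heq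
    simp only [mem_sigma, HasAntidiagonal.mem_antidiagonal, mem_product,
      mem_tightFinset] at hy hy'
    dsimp only at heq
    obtain rfl : a = a' := by
      have h := congrArg (uncovered (a + g + b)) heq
      rw [uncovered_union_shift hy.2.1 hy.2.2, (by omega : a + g + b = a' + g + b'),
        uncovered_union_shift hy'.2.1 hy'.2.2] at h
      have h1 := Finset.ext_iff.1 h (a + 1)
      have h2 := Finset.ext_iff.1 h (a' + 1)
      simp only [mem_Ioc] at h1 h2
      omega
    obtain rfl : b = b' := by omega
    have h := windows_union_shift hy.2.1.1.1 hy.2.2.1.1 (Nat.le_add_right a g)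
    have h' := windows_union_shift hy'.2.1.1.1 hy'.2.2.1.1 (Nat.le_add_right a g)
    rw [heq] at h
    rw [← h.1, ← h.2, h'.1, h'.2]
  · intro S hS
    rw [mem_filter, mem_saturatedFinset] at hS
    obtain ⟨a, g', -, hN, hunc⟩ := hS.1.exists_uncovered_eq_Ioc
    obtain rfl : g' = g := by rw [← hS.2, hunc, Nat.card_Ioc]; omega
    obtain ⟨b, rfl⟩ : ∃ b, m = a + b := ⟨m - a, by omega⟩
    rw [(by omega : a + b + g' = a + g' + b)] at hS hunc
    obtain ⟨hT, hU, hS_eq⟩ := hS.1.split_at_uncovered hg1 hunc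
    exact ⟨⟨(a, b), window 0 a S, window (a + g') b S⟩,
      mem_sigma.2 ⟨HasAntidiagonal.mem_antidiagonal.2 rfl,
        mem_product.2 ⟨mem_tightFinset.2 hT, mem_tightFinset.2 hU⟩⟩, hS_eq.symm⟩

lemma card_uncovered_eq_zero_iff {n : ℕ} {S : Finset (ℕ × ℕ)} :
    #(uncovered n S) = 0 ↔ ∀ i, 1 ≤ i → i ≤ n → Covers S i := by
  simp only [card_eq_zero, eq_empty_iff_forall_notMem, mem_uncovered, not_and, not_not]

lemma card_saturatedFinset (n : ℕ) :
    #(saturatedFinset n) = #(tightFinset n) + #{S ∈ saturatedFinset n | #(uncovered n S) = 1} +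
      #{S ∈ saturatedFinset n | #(uncovered n S) = 2} := by
  have hmaps : Set.MapsTo (fun S => #(uncovered n S)) (saturatedFinset n) (range 3) :=
    fun S hS => by
      obtain ⟨a, g, hg, -, h⟩ := (mem_saturatedFinset.1 hS).exists_uncovered_eq_Ioc
      simp only [coe_range, Set.mem_Iio, h, Nat.card_Ioc]
      omega
  rw [card_eq_sum_card_fiberwise hmaps, sum_range_succ, sum_range_succ, sum_range_one]
  congr 3
  ext S
  rw [mem_tightFinset, mem_filter, card_uncovered_eq_zero_iff, mem_saturatedFinset]
  rfl

lemma card_uncovered_le (n : ℕ) (S : Finset (ℕ × ℕ)) : #(uncovered n S) ≤ n := by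
  classical
  exact (card_filter_le _ _).trans (by simp)

lemma eq_empty_of_isSecStr {n : ℕ} {S : Finset (ℕ × ℕ)} (hn : n ≤ 2) (hS : IsSecStr n S) :
    S = ∅ :=
  eq_empty_of_forall_notMem fun p hp => by
    have := hS.1 p hp
    omega

lemma tightFinset_zero : tightFinset 0 = {∅} := by
  ext S
  rw [mem_tightFinset, mem_singleton]
  refine ⟨fun h => eq_empty_of_isSecStr (by omega) h.1.1, ?_⟩
  rintro rfl
  refine ⟨isSaturated_iff.2 ⟨⟨by simp, by simp, by simp⟩, fun p hp _ => ?_⟩, fun i h1 h2 => ?_⟩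
  · unfold IsArc at hp; omega
  · omega

lemma tightFinset_eq_empty {n : ℕ} (h1 : 1 ≤ n) (h2 : n ≤ 2) : tightFinset n = ∅ :=
  eq_empty_of_forall_notMem fun S hS => by
    have hT := mem_tightFinset.1 hS
    obtain ⟨p, hp, -⟩ := hT.2 1 le_rfl h1
    rw [eq_empty_of_isSecStr h2 hT.1.1] at hp
    exact notMem_empty p hp

open PowerSeries

noncomputable def tightGF : PowerSeries ℚ := mk fun n => (#(tightFinset n) : ℚ)

lemma coeff_tightGF (n : ℕ) : coeff n tightGF = #(tightFinset n) := coeff_mk _ _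

lemma coeff_satGF (n : ℕ) :
    coeff n satGF = if n = 0 then 0 else (#(saturatedFinset n) : ℚ) := by
  have h : {S : Finset (ℕ × ℕ) | IsSaturated n S} = ↑(saturatedFinset n) := by
    ext S
    simp [mem_saturatedFinset]
  rw [satGF, coeff_mk, h, Set.ncard_coe_finset]

lemma tightGF_eq : tightGF = 1 + X ^ 2 * (satGF * tightGF) := by
  ext n
  rw [map_add, coeff_X_pow_mul', coeff_one, coeff_tightGF]
  rcases n with _ | _ | _ | n
  · simp [tightFinset_zero]
  · simp [tightFinset_eq_empty]
  · simp [-coeff_zero_eq_constantCoeff, tightFinset_eq_empty, coeff_mul, coeff_satGF]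
  · rw [if_neg (by omega), if_pos (by omega), zero_add, (by omega : n + 3 - 2 = n + 1), coeff_mul,
      Nat.sum_antidiagonal_succ, card_tightFinset_add_three]
    simp [coeff_satGF, coeff_tightGF]

lemma coeff_X_pow_mul_tightGF_sq {g : ℕ} (n : ℕ) (hg1 : 1 ≤ g) (hg2 : g ≤ 2) :
    coeff n (X ^ g * tightGF ^ 2) = (#{S ∈ saturatedFinset n | #(uncovered n S) = g} : ℚ) := by
  rw [coeff_X_pow_mul']
  split_ifs with hgn
  · obtain ⟨m, rfl⟩ : ∃ m, n = m + g := ⟨n - g, by omega⟩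
    rw [card_filter_card_uncovered m g hg1 hg2, Nat.add_sub_cancel, sq, coeff_mul]
    simp [coeff_tightGF]
  · refine (Nat.cast_eq_zero.2 (card_eq_zero.2 (filter_eq_empty_iff.2 fun S _ h => ?_))).symm
    have := card_uncovered_le n S
    omega

lemma satGF_eq : satGF = tightGF - 1 + (X + X ^ 2) * tightGF ^ 2 := by
  ext n
  rcases n with _ | n
  · simp [-coeff_zero_eq_constantCoeff, coeff_satGF, coeff_tightGF, tightFinset_zero, add_mul,
      coeff_X_pow_mul', coeff_zero_X_mul]
  · have h1 := coeff_X_pow_mul_tightGF_sq (n + 1) le_rfl one_le_two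
    rw [pow_one] at h1
    rw [coeff_satGF, if_neg n.succ_ne_zero, card_saturatedFinset, add_mul, map_add, map_sub,
      map_add, h1, coeff_X_pow_mul_tightGF_sq (n + 1) one_le_two le_rfl, coeff_one,
      coeff_tightGF]
    simp [add_assoc]

open PowerSeries in
/-- The generating function of saturated structures satisfies the cubic equation
`z⁴S³ + z²(z² − 2)S² + (1 − z²)S = z + z²`. -/
theorem saturated_gf_cubic :
    X ^ 4 * satGF ^ 3 + X ^ 2 * (X ^ 2 - 2) * satGF ^ 2 + (1 - X ^ 2) * satGF
      = X + X ^ 2 := by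
  have hP : tightGF * (1 - X ^ 2 * satGF) = 1 := by linear_combination tightGF_eq
  -- substitute `tightGF = (1 - X²S)⁻¹` into `satGF_eq` and clear denominators
  linear_combination (1 - X ^ 2 * satGF) ^ 2 * satGF_eq +
    ((1 - X ^ 2 * satGF) + (X + X ^ 2) * (tightGF * (1 - X ^ 2 * satGF) + 1)) * hP
end

section
/- For every integer n ≥ 2, the number of secondary structures on [1,n] (with θ = 1) that are either empty or stem-loops (equivalently, secondary structures with at most one hairpin loop, i.e., whose base pairs are pairwise nested) equals 2^{n−2}. -/
/-- A stem-loop: a secondary structure containing a (unique) base pair `(i₀,j₀)` such that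
every other base pair `(i,j)` satisfies `i < i₀ < j₀ < j`. -/
def IsStemLoop (n : ℕ) (S : Finset (ℕ × ℕ)) : Prop :=
  IsSecStr n S ∧ ∃ p ∈ S, ∀ q ∈ S, q ≠ p → q.1 < p.1 ∧ p.2 < q.2

open Finset

theorem Finset.card_powerset_filter_even {α : Type*} (s : Finset α) :
    #{t ∈ s.powerset | Even #t} = 2 ^ (#s - 1) := by
  rcases s.eq_empty_or_nonempty with rfl | hs
  · simp [filter_singleton]
  have hsum : (#{t ∈ s.powerset | Even #t} : ℤ) - #{t ∈ s.powerset | ¬Even #t} = 0 := by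
    rw [← sum_powerset_neg_one_pow_card_of_nonempty hs,
      ← sum_filter_add_sum_filter_not s.powerset (fun t => Even #t),
      sum_congr rfl fun t ht => (mem_filter.1 ht).2.neg_one_pow,
      sum_congr rfl fun t ht => (Nat.not_even_iff_odd.1 (mem_filter.1 ht).2).neg_one_pow]
    simp [sub_eq_add_neg]
  have htotal := card_filter_add_card_filter_not (s := s.powerset) (fun t => Even #t)
  rw [card_powerset] at htotal
  have : 2 ^ #s = 2 * 2 ^ (#s - 1) := by
    rw [← pow_succ', Nat.sub_add_cancel hs.card_pos]
  omega

def IsNestedFamily (n : ℕ) (S : Finset (ℕ × ℕ)) : Prop :=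
  (∀ p ∈ S, 1 ≤ p.1 ∧ p.1 + 1 < p.2 ∧ p.2 ≤ n) ∧
  (∀ p ∈ S, ∀ q ∈ S, p ≠ q → (p.1 < q.1 ∧ q.2 < p.2) ∨ (q.1 < p.1 ∧ p.2 < q.2))

def IsOutermost (S : Finset (ℕ × ℕ)) (p : ℕ × ℕ) : Prop :=
  p ∈ S ∧ ∀ q ∈ S, q ≠ p → p.1 < q.1 ∧ q.2 < p.2

namespace IsNestedFamily

variable {n : ℕ} {S : Finset (ℕ × ℕ)}

theorem erase (h : IsNestedFamily n S) (p : ℕ × ℕ) : IsNestedFamily n (S.erase p) :=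
  ⟨fun q hq => h.1 q (mem_erase.1 hq).2,
   fun q hq r hr => h.2 q (mem_erase.1 hq).2 r (mem_erase.1 hr).2⟩

theorem insert (h : IsNestedFamily n S) {p : ℕ × ℕ} (hp : 1 ≤ p.1 ∧ p.1 + 1 < p.2 ∧ p.2 ≤ n)
    (hout : ∀ q ∈ S, p.1 < q.1 ∧ q.2 < p.2) : IsNestedFamily n (insert p S) := by
  refine ⟨fun q hq => ?_, fun q hq r hr hqr => ?_⟩
  · rcases mem_insert.1 hq with rfl | hq
    exacts [hp, h.1 q hq]
  rcases mem_insert.1 hq with rfl | hqS <;> rcases mem_insert.1 hr with rfl | hrS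
  · exact absurd rfl hqr
  · exact .inl (hout r hrS)
  · exact .inr (hout q hqS)
  · exact h.2 q hqS r hrS hqr

theorem exists_isOutermost (h : IsNestedFamily n S) (hne : S.Nonempty) :
    ∃ p, IsOutermost S p := by
  obtain ⟨p, hp, hmin⟩ := S.exists_min_image Prod.fst hne
  refine ⟨p, hp, fun q hq hqp => ?_⟩
  have := h.2 p hp q hq (Ne.symm hqp)
  have := hmin q hq
  omega

theorem isSecStr (h : IsNestedFamily n S) : IsSecStr n S := by
  refine ⟨h.1, fun p hp q hq hpq => ?_, fun p hp q hq => ?_⟩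
  · have := h.1 p hp
    have := h.1 q hq
    have := h.2 p hp q hq hpq
    omega
  · by_cases hpq : p = q
    · subst hpq; omega
    · have := h.2 p hp q hq hpq
      omega

theorem isStemLoop (h : IsNestedFamily n S) (hne : S.Nonempty) : IsStemLoop n S := by
  obtain ⟨p, hp, hmax⟩ := S.exists_max_image Prod.fst hne
  refine ⟨h.isSecStr, p, hp, fun q hq hqp => ?_⟩
  have := h.2 p hp q hq (Ne.symm hqp)
  have := hmax q hq
  omega

end IsNestedFamily

theorem IsStemLoop.isNestedFamily {n : ℕ} {S : Finset (ℕ × ℕ)} (h : IsStemLoop n S) :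
    IsNestedFamily n S := by
  obtain ⟨⟨hbound, hdisj, hcross⟩, p₀, hp₀, hinner⟩ := h
  refine ⟨hbound, fun p hp q hq hpq => ?_⟩
  have := hdisj p hp q hq hpq
  have := hbound p₀ hp₀
  by_cases hpp₀ : p = p₀
  · subst hpp₀
    have := hinner q hq (Ne.symm hpq)
    omega
  by_cases hqp₀ : q = p₀
  · subst hqp₀
    have := hinner p hp hpp₀
    omega
  have := hinner p hp hpp₀
  have := hinner q hq hqp₀
  have := hcross p hp q hq
  have := hcross q hq p hp
  omega

theorem isSecStr_and_empty_or_isStemLoop_iff {n : ℕ} {S : Finset (ℕ × ℕ)} :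
    IsSecStr n S ∧ (S = ∅ ∨ IsStemLoop n S) ↔ IsNestedFamily n S := by
  refine ⟨fun ⟨_, hS⟩ => ?_, fun h => ⟨h.isSecStr, ?_⟩⟩
  · rcases hS with rfl | hS
    exacts [⟨by simp, by simp⟩, hS.isNestedFamily]
  · rcases S.eq_empty_or_nonempty with hS | hS
    exacts [.inl hS, .inr (h.isStemLoop hS)]

/-- Since `i + 1 < j`, the shift `j ↦ j - 1` keeps the two endpoints of a pair distinct while
mapping `[1, n]` into `[1, n - 1]`. -/
def endpoints (S : Finset (ℕ × ℕ)) : Finset ℕ :=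
  S.image Prod.fst ∪ S.image (fun p => p.2 - 1)

theorem mem_endpoints {S : Finset (ℕ × ℕ)} {x : ℕ} :
    x ∈ endpoints S ↔ (∃ p ∈ S, p.1 = x) ∨ (∃ p ∈ S, p.2 - 1 = x) := by
  simp [endpoints]

theorem fst_mem_endpoints {S : Finset (ℕ × ℕ)} {p : ℕ × ℕ} (hp : p ∈ S) : p.1 ∈ endpoints S :=
  mem_endpoints.2 (.inl ⟨p, hp, rfl⟩)

theorem snd_sub_one_mem_endpoints {S : Finset (ℕ × ℕ)} {p : ℕ × ℕ} (hp : p ∈ S) :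
    p.2 - 1 ∈ endpoints S :=
  mem_endpoints.2 (.inr ⟨p, hp, rfl⟩)

@[simp]
theorem endpoints_eq_empty {S : Finset (ℕ × ℕ)} : endpoints S = ∅ ↔ S = ∅ := by
  simp [endpoints]

theorem endpoints_insert (S : Finset (ℕ × ℕ)) (p : ℕ × ℕ) :
    endpoints (insert p S) = insert p.1 (insert (p.2 - 1) (endpoints S)) := by
  ext x
  simp only [endpoints, image_insert, mem_union, mem_insert]
  tauto

namespace IsNestedFamily

variable {n : ℕ} {S : Finset (ℕ × ℕ)}

theorem endpoints_subset (h : IsNestedFamily n S) : endpoints S ⊆ Icc 1 (n - 1) := by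
  intro x hx
  rw [mem_Icc]
  rcases mem_endpoints.1 hx with ⟨p, hp, rfl⟩ | ⟨p, hp, rfl⟩ <;> have := h.1 p hp <;> omega

theorem card_endpoints (h : IsNestedFamily n S) : #(endpoints S) = 2 * #S := by
  have hfst : Set.InjOn Prod.fst (S : Set (ℕ × ℕ)) := fun p hp q hq hpq => by
    by_contra hne
    have := h.2 p hp q hq hne
    omega
  have hsnd : Set.InjOn (fun p : ℕ × ℕ => p.2 - 1) (S : Set (ℕ × ℕ)) := fun p hp q hq hpq => by
    by_contra hne
    have := h.2 p hp q hq hne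
    have := h.1 p hp
    have := h.1 q hq
    dsimp only at hpq
    omega
  have hdisj : Disjoint (S.image Prod.fst) (S.image fun p => p.2 - 1) := by
    simp only [disjoint_left, mem_image, not_exists, not_and]
    rintro _ ⟨p, hp, rfl⟩ q hq hqp
    have := h.1 p hp
    have := h.1 q hq
    by_cases hpq : p = q
    · subst hpq; omega
    · have := h.2 p hp q hq hpq
      omega
  rw [endpoints, card_union_of_disjoint hdisj, card_image_of_injOn hfst,
    card_image_of_injOn hsnd, two_mul]

end IsNestedFamily

namespace IsOutermost

variable {n : ℕ} {S : Finset (ℕ × ℕ)} {p : ℕ × ℕ}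

theorem mem_endpoints_bounds (h : IsNestedFamily n S) (hp : IsOutermost S p) {x : ℕ}
    (hx : x ∈ endpoints S) : p.1 ≤ x ∧ x ≤ p.2 - 1 := by
  have := h.1 p hp.1
  rcases mem_endpoints.1 hx with ⟨q, hq, rfl⟩ | ⟨q, hq, rfl⟩ <;>
  · have := h.1 q hq
    by_cases hqp : q = p
    · subst hqp; omega
    · have := hp.2 q hq hqp; omega

theorem eq_of_endpoints_eq {S' : Finset (ℕ × ℕ)} {p' : ℕ × ℕ} (h : IsNestedFamily n S)
    (h' : IsNestedFamily n S') (hp : IsOutermost S p) (hp' : IsOutermost S' p')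
    (he : endpoints S = endpoints S') : p = p' := by
  have := hp.mem_endpoints_bounds h (he ▸ fst_mem_endpoints hp'.1)
  have := hp.mem_endpoints_bounds h (he ▸ snd_sub_one_mem_endpoints hp'.1)
  have := hp'.mem_endpoints_bounds h' (he ▸ fst_mem_endpoints hp.1)
  have := hp'.mem_endpoints_bounds h' (he ▸ snd_sub_one_mem_endpoints hp.1)
  have := h.1 p hp.1
  have := h'.1 p' hp'.1
  ext <;> omega

theorem mem_endpoints_erase_bounds (h : IsNestedFamily n S) (hp : IsOutermost S p) {x : ℕ}
    (hx : x ∈ endpoints (S.erase p)) : p.1 < x ∧ x < p.2 - 1 := by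
  rcases mem_endpoints.1 hx with ⟨q, hq, rfl⟩ | ⟨q, hq, rfl⟩ <;>
  · obtain ⟨hqp, hq⟩ := mem_erase.1 hq
    have := h.1 q hq
    have := hp.2 q hq hqp
    omega

theorem endpoints_erase (h : IsNestedFamily n S) (hp : IsOutermost S p) :
    endpoints (S.erase p) = ((endpoints S).erase p.1).erase (p.2 - 1) := by
  have hbounds := fun x => hp.mem_endpoints_erase_bounds h (x := x)
  have := h.1 p hp.1
  conv_rhs => rw [← insert_erase hp.1, endpoints_insert]
  rw [erase_insert fun hmem => by grind, erase_insert fun hmem => by grind]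

end IsOutermost

theorem IsNestedFamily.eq_of_endpoints_eq {n : ℕ} {S S' : Finset (ℕ × ℕ)}
    (h : IsNestedFamily n S) (h' : IsNestedFamily n S') (he : endpoints S = endpoints S') :
    S = S' := by
  induction S using Finset.strongInduction generalizing S' with
  | H S ih =>
  rcases S.eq_empty_or_nonempty with rfl | hne
  · rw [eq_comm, ← endpoints_eq_empty, ← he, endpoints_eq_empty]
  have hne' : S'.Nonempty := by
    rw [nonempty_iff_ne_empty, Ne, ← endpoints_eq_empty, ← he, endpoints_eq_empty]
    exact hne.ne_empty
  obtain ⟨p, hp⟩ := h.exists_isOutermost hne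
  obtain ⟨p', hp'⟩ := h'.exists_isOutermost hne'
  obtain rfl : p = p' := hp.eq_of_endpoints_eq h h' hp' he
  have herase : S.erase p = S'.erase p :=
    ih _ (erase_ssubset hp.1) (h.erase p) (h'.erase p) (by
      rw [hp.endpoints_erase h, hp'.endpoints_erase h', he])
  rw [← insert_erase hp.1, ← insert_erase hp'.1, herase]

theorem exists_isNestedFamily_endpoints_eq {n : ℕ} {T : Finset ℕ}
    (hT : T ⊆ Icc 1 (n - 1)) (heven : Even #T) :
    ∃ S, IsNestedFamily n S ∧ endpoints S = T := by
  induction T using Finset.strongInduction with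
  | H T ih =>
  rcases T.eq_empty_or_nonempty with rfl | hne
  · exact ⟨∅, ⟨by simp, by simp⟩, endpoints_eq_empty.2 rfl⟩
  have hcard : 1 < #T := by
    obtain ⟨m, hm⟩ := heven
    have := hne.card_pos
    omega
  set a := T.min' hne
  set b := T.max' hne
  have hab : a < b := T.min'_lt_max'_of_card hcard
  have haT : a ∈ T := T.min'_mem hne
  have hbT : b ∈ T.erase a := mem_erase.2 ⟨hab.ne', T.max'_mem hne⟩
  set T' := (T.erase a).erase b
  have hT'T : T' ⊂ T := (erase_ssubset hbT).trans_subset (erase_subset a T)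
  have hcardT' : #T' = #T - 2 := by
    rw [card_erase_of_mem hbT, card_erase_of_mem haT]
    omega
  obtain ⟨S', hS', hS'T'⟩ := ih T' hT'T (hT'T.subset.trans hT)
    (by rw [hcardT']; exact (Nat.even_sub hcard).2 (iff_of_true heven even_two))
  have hinside : ∀ q ∈ S', a < q.1 ∧ q.2 < b + 1 := fun q hq => by
    have h1 := hS'T' ▸ fst_mem_endpoints hq
    have h2 := hS'T' ▸ snd_sub_one_mem_endpoints hq
    simp only [T', mem_erase] at h1 h2
    have := T.min'_le _ h1.2.2
    have := T.le_max' _ h2.2.2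
    have := hS'.1 q hq
    omega
  have := mem_Icc.1 (hT haT)
  have := mem_Icc.1 (hT (mem_of_mem_erase hbT))
  refine ⟨insert (a, b + 1) S', hS'.insert (by dsimp only; omega) hinside, ?_⟩
  rw [endpoints_insert, hS'T', add_tsub_cancel_right, insert_erase hbT, insert_erase haT]

theorem image_endpoints_setOf_isNestedFamily (n : ℕ) :
    endpoints '' {S | IsNestedFamily n S} = {T | T ∈ (Icc 1 (n - 1)).powerset ∧ Even #T} := by
  ext T
  simp only [Set.mem_image, Set.mem_ofPred_eq, mem_powerset]
  constructor
  · rintro ⟨S, hS, rfl⟩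
    exact ⟨hS.endpoints_subset, hS.card_endpoints ▸ even_two_mul _⟩
  · rintro ⟨hT, heven⟩
    exact exists_isNestedFamily_endpoints_eq hT heven

theorem num_empty_or_stem_loops_general (n : ℕ) :
    Set.ncard {S : Finset (ℕ × ℕ) | IsSecStr n S ∧ (S = ∅ ∨ IsStemLoop n S)}
      = 2 ^ (n - 2) := by
  have hinj : Set.InjOn endpoints {S | IsNestedFamily n S} :=
    fun S hS S' hS' he => IsNestedFamily.eq_of_endpoints_eq hS hS' he
  simp_rw [isSecStr_and_empty_or_isStemLoop_iff]
  rw [← hinj.ncard_image, image_endpoints_setOf_isNestedFamily, ← coe_filter,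
    Set.ncard_coe_finset, card_powerset_filter_even, Nat.card_Icc, Nat.add_sub_cancel,
    Nat.sub_sub]

/-- For every `n ≥ 2`, the number of secondary structures on `[1,n]` (θ = 1) that are
either empty or stem-loops (equivalently, whose base pairs are pairwise nested)
equals `2^(n−2)`. -/
theorem num_empty_or_stem_loops (n : ℕ) (hn : 2 ≤ n) :
    Set.ncard {S : Finset (ℕ × ℕ) | IsSecStr n S ∧ (S = ∅ ∨ IsStemLoop n S)}
      = 2 ^ (n - 2) :=
  num_empty_or_stem_loops_general n
end

section
/- For n ≥ 3 let c(n) denote the number of saturated stem-loop structures on [1,n] (with θ = 1). Then c(3) = 1, c(4) = 3, c(5) = 5, c(6) = 7, and for every n ≥ 7 the recurrence c(n) = c(n−2) + 2·c(n−3) + 2·c(n−4) holds. -/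
/-- The number of saturated stem-loop structures on `[1,n]` (θ = 1). -/
noncomputable def numSatStemLoop (n : ℕ) : ℕ :=
  Set.ncard {S : Finset (ℕ × ℕ) | IsSaturated n S ∧ IsStemLoop n S}

/-!
In a stem-loop the base pairs are totally nested, so there is an outermost pair `(a, b)`, and
removing it leaves, shifted down by `a`, a structure on `[1, b-a-1]` which is again a stem-loop.
Saturation passes between the two in both directions exactly when no base pair fits outside
`(a, b)`, i.e. `a ≤ 3`, `b ≥ n - 2` and `a = 1 ∨ b = n`. For `n ≥ 7` this leaves the outermost
pairs `(1,n)`, `(2,n)`, `(3,n)`, `(1,n-1)`, `(1,n-2)`, contributing `c(n-2)`, `c(n-3)`, `c(n-4)`,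
`c(n-3)`, `c(n-4)`. The initial values are computed by enumeration.
-/

namespace SecStr

open Finset

def IsPair (n : ℕ) (p : ℕ × ℕ) : Prop := 1 ≤ p.1 ∧ p.1 + 1 < p.2 ∧ p.2 ≤ n

def Compatible (p q : ℕ × ℕ) : Prop :=
  p = q ∨ ((p.1 ≠ q.1 ∧ p.1 ≠ q.2 ∧ p.2 ≠ q.1 ∧ p.2 ≠ q.2) ∧
    ¬ (p.1 < q.1 ∧ q.1 < p.2 ∧ p.2 < q.2) ∧ ¬ (q.1 < p.1 ∧ p.1 < q.2 ∧ q.2 < p.2))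

variable {a m n : ℕ} {S : Finset (ℕ × ℕ)}

lemma compatible_comm {p q : ℕ × ℕ} : Compatible p q ↔ Compatible q p := by
  simp only [Compatible, Prod.ext_iff]
  omega

lemma compatible_add_iff {p q : ℕ × ℕ} :
    Compatible (p + (a, a)) (q + (a, a)) ↔ Compatible p q := by
  simp only [Compatible, Prod.ext_iff, Prod.fst_add, Prod.snd_add]
  omega

lemma isSecStr_iff :
    IsSecStr n S ↔ (∀ p ∈ S, IsPair n p) ∧ ∀ p ∈ S, ∀ q ∈ S, Compatible p q := by
  refine ⟨fun ⟨hpair, hends, hcross⟩ => ⟨hpair, fun p hp q hq => ?_⟩,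
    fun ⟨hpair, hcompat⟩ => ⟨hpair, fun p hp q hq hpq => ?_, fun p hp q hq => ?_⟩⟩
  · by_cases hpq : p = q
    · exact Or.inl hpq
    · exact Or.inr ⟨hends p hp q hq hpq, hcross p hp q hq, hcross q hq p hp⟩
  · obtain h | h := hcompat p hp q hq
    · exact absurd h hpq
    · exact h.1
  · have := hpair p hp
    obtain rfl | h := hcompat p hp q hq
    · omega
    · exact h.2.1

lemma isSecStr_insert_iff {p : ℕ × ℕ} :
    IsSecStr n (insert p S) ↔ IsPair n p ∧ (∀ q ∈ S, Compatible p q) ∧ IsSecStr n S := by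
  simp only [isSecStr_iff, forall_mem_insert]
  constructor
  · rintro ⟨⟨hp, hS⟩, ⟨-, hpS⟩, hSS⟩
    exact ⟨hp, hpS, hS, fun q hq r hr => (hSS q hq).2 r hr⟩
  · rintro ⟨hp, hpS, hS, hSS⟩
    exact ⟨⟨hp, hS⟩, ⟨Or.inl rfl, hpS⟩,
      fun q hq => ⟨compatible_comm.1 (hpS q hq), hSS q hq⟩⟩

lemma isSaturated_iff :
    IsSaturated n S ↔
      IsSecStr n S ∧ ∀ p, IsPair n p → p ∉ S → ∃ q ∈ S, ¬ Compatible p q := by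
  refine and_congr_right fun hS => forall_congr' fun p => ?_
  rw [isSecStr_insert_iff]
  simp only [hS, and_true, not_and, not_forall, exists_prop]
  tauto

lemma IsSaturated.nonempty (h : IsSaturated m S) (hm : 3 ≤ m) : S.Nonempty := by
  rw [Finset.nonempty_iff_ne_empty]
  rintro rfl
  obtain ⟨q, hq, -⟩ :=
    (isSaturated_iff.1 h).2 (1, 3) (by simp only [IsPair]; omega) (notMem_empty _)
  exact notMem_empty q hq

def enclose (a m : ℕ) (S : Finset (ℕ × ℕ)) : Finset (ℕ × ℕ) :=
  insert (a, a + m + 1) (S.image (· + (a, a)))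

lemma mem_enclose {q : ℕ × ℕ} :
    q ∈ enclose a m S ↔ q = (a, a + m + 1) ∨ ∃ p ∈ S, p + (a, a) = q := by
  simp only [enclose, mem_insert, mem_image]

lemma bounds_of_mem_enclose (hS : ∀ p ∈ S, IsPair m p) {q : ℕ × ℕ} (hq : q ∈ enclose a m S) :
    a ≤ q.1 ∧ q.1 < q.2 ∧ q.2 ≤ a + m + 1 := by
  obtain rfl | ⟨p, hp, rfl⟩ := mem_enclose.1 hq
  · simp only; omega
  · have := hS p hp
    simp only [IsPair, Prod.fst_add, Prod.snd_add] at this ⊢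
    omega

lemma isSecStr_enclose (hS : IsSecStr m S) (ha : IsPair n (a, a + m + 1)) :
    IsSecStr n (enclose a m S) := by
  rw [isSecStr_iff] at hS
  rw [enclose, isSecStr_insert_iff, isSecStr_iff]
  simp only [forall_mem_image, compatible_add_iff]
  refine ⟨ha, fun p hp => ?_, fun p hp => ?_, hS.2⟩
  all_goals
    have := hS.1 p hp
    simp only [IsPair, Compatible, Prod.ext_iff, Prod.fst_add, Prod.snd_add] at this ha ⊢
    omega

lemma enclose_inj {m' a' : ℕ} {S' : Finset (ℕ × ℕ)} (hS : ∀ p ∈ S, IsPair m p)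
    (hS' : ∀ p ∈ S', IsPair m' p) :
    enclose a m S = enclose a' m' S' ↔ a = a' ∧ m = m' ∧ S = S' := by
  refine ⟨fun h => ?_, by rintro ⟨rfl, rfl, rfl⟩; rfl⟩
  have h₁ := bounds_of_mem_enclose hS (by rw [h]; exact mem_insert_self _ _)
  have h₂ := bounds_of_mem_enclose hS' (by rw [← h]; exact mem_insert_self _ _)
  obtain ⟨rfl, rfl⟩ : a = a' ∧ m = m' := by simp only at h₁ h₂; omega
  refine ⟨rfl, rfl, image_injective (add_left_injective (a, a)) ?_⟩
  have hnotin : ∀ T : Finset (ℕ × ℕ), (∀ p ∈ T, IsPair m p) →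
      (a, a + m + 1) ∉ T.image (· + (a, a)) := by
    intro T hT hmem
    obtain ⟨p, hp, hpa⟩ := mem_image.1 hmem
    have := hT p hp
    simp only [IsPair, Prod.ext_iff, Prod.fst_add] at this hpa
    omega
  simpa only [enclose, erase_insert (hnotin S hS), erase_insert (hnotin S' hS')]
    using congrArg (erase · (a, a + m + 1)) h

lemma IsSecStr.exists_eq_enclose {b : ℕ} (hS : IsSecStr n S) (hab : (a, b) ∈ S)
    (hout : ∀ q ∈ S, a ≤ q.1 ∧ q.2 ≤ b) :
    ∃ m S', a + m + 1 = b ∧ IsSecStr m S' ∧ S = enclose a m S' := by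
  rw [isSecStr_iff] at hS
  have hab' := hS.1 _ hab
  have inner : ∀ q ∈ S.erase (a, b), a < q.1 ∧ q.2 < b := by
    intro q hq
    obtain ⟨hqab, hq⟩ := mem_erase.1 hq
    have hcompat := hS.2 q hq _ hab
    have hqout := hout q hq
    have hpair := hS.1 q hq
    simp only [IsPair, Compatible, ne_eq, Prod.ext_iff] at hqab hcompat hpair
    omega
  have shift_cancel : ∀ q ∈ S.erase (a, b), q - (a, a) + (a, a) = q := fun q hq => by
    have := inner q hq
    have := hS.1 q (mem_of_mem_erase hq)
    simp only [IsPair] at this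
    exact tsub_add_cancel_of_le (Prod.mk_le_mk.2 ⟨by omega, by omega⟩)
  refine ⟨b - a - 1, (S.erase (a, b)).image (· - (a, a)), by simp only [IsPair] at hab'; omega,
    isSecStr_iff.2 ⟨?_, ?_⟩, ?_⟩
  · simp only [forall_mem_image]
    intro q hq
    have hqin := inner q hq
    have hq := hS.1 q (mem_of_mem_erase hq)
    simp only [IsPair, Prod.fst_sub, Prod.snd_sub] at hab' hq ⊢
    omega
  · simp only [forall_mem_image]
    intro p hp q hq
    rw [← compatible_add_iff (a := a), shift_cancel p hp, shift_cancel q hq]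
    exact hS.2 p (mem_of_mem_erase hp) q (mem_of_mem_erase hq)
  · rw [enclose, image_image, show a + (b - a - 1) + 1 = b by simp only [IsPair] at hab'; omega,
      Function.comp_def, image_congr (g := id) shift_cancel, image_id, insert_erase hab]

lemma isSaturated_enclose_iff (hS : IsSecStr m S) (ha : IsPair n (a, a + m + 1)) :
    IsSaturated n (enclose a m S) ↔
      IsSaturated m S ∧ a ≤ 3 ∧ n ≤ a + m + 3 ∧ (a = 1 ∨ a + m + 1 = n) := by
  have hbounds : ∀ q ∈ enclose a m S, a ≤ q.1 ∧ q.1 < q.2 ∧ q.2 ≤ a + m + 1 :=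
    fun _ => bounds_of_mem_enclose hS.1
  simp only [isSaturated_iff, isSecStr_enclose hS ha, hS, true_and]
  simp only [IsPair] at ha
  constructor
  · intro h
    have outside : ∀ p, IsPair n p → p.2 < a ∨ a + m + 1 < p.1 ∨ (p.1 < a ∧ a + m + 1 < p.2) →
        False := by
      intro p hp hout
      simp only [IsPair] at hp
      obtain ⟨q, hq, hpq⟩ := h p hp fun hpS => by have := hbounds _ hpS; omega
      have := hbounds _ hq
      simp only [Compatible, Prod.ext_iff] at hpq
      omega
    refine ⟨fun p hp hpS => ?_, ?_, ?_, ?_⟩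
    · have hpW : p + (a, a) ∉ enclose a m S := by
        rw [mem_enclose]
        rintro (he | ⟨p', hp', he⟩)
        · simp only [IsPair, Prod.ext_iff, Prod.fst_add] at hp he
          omega
        · exact hpS (add_right_cancel he ▸ hp')
      obtain ⟨q, hq, hpq⟩ := h (p + (a, a))
        (by simp only [IsPair, Prod.fst_add, Prod.snd_add] at hp ⊢; omega) hpW
      obtain rfl | ⟨q', hq', rfl⟩ := mem_enclose.1 hq
      · simp only [IsPair, Compatible, Prod.ext_iff, Prod.fst_add, Prod.snd_add] at hp hpq
        omega
      · exact ⟨q', hq', fun hpq' => hpq (compatible_add_iff.2 hpq')⟩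
    · by_contra
      exact outside (1, 3) (by simp only [IsPair]; omega) (by omega)
    · by_contra
      exact outside (a + m + 2, a + m + 4) (by simp only [IsPair]; omega) (by omega)
    · by_contra
      exact outside (a - 1, a + m + 2) (by simp only [IsPair]; omega) (by omega)
  · rintro ⟨h, h3, hn3, h1⟩ p hp hpW
    simp only [IsPair] at hp
    by_cases hin : a < p.1 ∧ p.2 < a + m + 1
    · obtain ⟨p, rfl⟩ : ∃ p', p = p' + (a, a) :=
        ⟨p - (a, a), (tsub_add_cancel_of_le (Prod.mk_le_mk.2 ⟨hin.1.le, by omega⟩)).symm⟩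
      obtain ⟨q, hq, hpq⟩ := h p
        (by simp only [IsPair, Prod.fst_add, Prod.snd_add] at hp hin ⊢; omega)
        (fun hpS => hpW (mem_insert_of_mem (mem_image_of_mem _ hpS)))
      exact ⟨q + (a, a), mem_insert_of_mem (mem_image_of_mem _ hq), compatible_add_iff.not.2 hpq⟩
    · refine ⟨(a, a + m + 1), mem_insert_self _ _, ?_⟩
      have hne : p ≠ (a, a + m + 1) := fun he => hpW (he ▸ mem_insert_self _ _)
      simp only [Compatible, ne_eq, Prod.ext_iff] at hne ⊢
      omega

lemma isStemLoop_enclose_iff (hS : IsSecStr m S) (hne : S.Nonempty)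
    (ha : IsPair n (a, a + m + 1)) : IsStemLoop n (enclose a m S) ↔ IsStemLoop m S := by
  simp only [IsStemLoop, isSecStr_enclose hS ha, hS, true_and]
  have shift_mem {q : ℕ × ℕ} (hq : q ∈ S) : q + (a, a) ∈ enclose a m S :=
    mem_insert_of_mem (mem_image_of_mem _ hq)
  constructor
  · rintro ⟨p, hp, hinner⟩
    obtain rfl | ⟨p', hp', rfl⟩ := mem_enclose.1 hp
    · obtain ⟨q, hq⟩ := hne
      have hq₁ := (hS.1 q hq).1
      have := hinner _ (shift_mem hq) fun he => by
        simp only [Prod.ext_iff, Prod.fst_add] at he; omega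
      simp only [Prod.fst_add] at this
      omega
    · refine ⟨p', hp', fun q hq hqp => ?_⟩
      have := hinner _ (shift_mem hq) fun he => hqp (add_right_cancel he)
      simp only [Prod.fst_add, Prod.snd_add] at this
      omega
  · rintro ⟨p, hp, hinner⟩
    refine ⟨p + (a, a), shift_mem hp, fun q hq hqp => ?_⟩
    obtain rfl | ⟨q', hq', rfl⟩ := mem_enclose.1 hq
    · have := hS.1 p hp
      simp only [Prod.fst_add, Prod.snd_add] at this ⊢
      omega
    · have := hinner q' hq' fun he => hqp (he ▸ rfl)
      simp only [Prod.fst_add, Prod.snd_add]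
      omega

lemma IsStemLoop.exists_outermost (h : IsStemLoop n S) :
    ∃ a b, (a, b) ∈ S ∧ ∀ q ∈ S, a ≤ q.1 ∧ q.2 ≤ b := by
  obtain ⟨hS, p₀, hp₀, hinner⟩ := h
  obtain ⟨p, hp, hmin⟩ := S.exists_min_image Prod.fst ⟨p₀, hp₀⟩
  refine ⟨p.1, p.2, hp, fun q hq => ⟨hmin q hq, ?_⟩⟩
  rw [isSecStr_iff] at hS
  have hpq := hS.2 p hp q hq
  have hqp := hmin q hq
  have hp' : p = p₀ ∨ p.1 < p₀.1 ∧ p₀.2 < p.2 := or_iff_not_imp_left.2 (hinner p hp)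
  have hq' : q = p₀ ∨ q.1 < p₀.1 ∧ p₀.2 < q.2 := or_iff_not_imp_left.2 (hinner q hq)
  have := hS.1 p₀ hp₀
  simp only [IsPair, Compatible, Prod.ext_iff] at hpq hp' hq' this
  omega

instance (n : ℕ) : DecidablePred (IsPair n) := fun _ => by unfold IsPair; infer_instance

instance (n : ℕ) (S : Finset (ℕ × ℕ)) : Decidable (IsSecStr n S) := by
  unfold IsSecStr; infer_instance

instance (n : ℕ) (S : Finset (ℕ × ℕ)) : Decidable (IsStemLoop n S) := by
  unfold IsStemLoop; infer_instance

def pairsOn (n : ℕ) : Finset (ℕ × ℕ) := (range (n + 1) ×ˢ range (n + 1)).filter (IsPair n)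

lemma mem_pairsOn {p : ℕ × ℕ} : p ∈ pairsOn n ↔ IsPair n p := by
  simp only [pairsOn, IsPair, mem_filter, mem_product, mem_range, and_iff_right_iff_imp]
  omega

lemma IsSecStr.subset_pairsOn (h : IsSecStr n S) : S ⊆ pairsOn n :=
  fun p hp => mem_pairsOn.2 (h.1 p hp)

lemma isSaturated_iff_pairsOn :
    IsSaturated n S ↔
      IsSecStr n S ∧ ∀ p ∈ pairsOn n, p ∉ S → ¬ IsSecStr n (insert p S) :=
  and_congr_right fun _ => ⟨fun h p _ => h p,
    fun h p hp hins => h p ((IsSecStr.subset_pairsOn hins) (mem_insert_self p S)) hp hins⟩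

instance (n : ℕ) (S : Finset (ℕ × ℕ)) : Decidable (IsSaturated n S) :=
  decidable_of_iff _ isSaturated_iff_pairsOn.symm

def satStemLoops (n : ℕ) : Set (Finset (ℕ × ℕ)) := {S | IsSaturated n S ∧ IsStemLoop n S}

lemma satStemLoops_eq_filter (n : ℕ) :
    satStemLoops n = ↑((pairsOn n).powerset.filter fun S => IsSaturated n S ∧ IsStemLoop n S) := by
  ext S
  simp only [satStemLoops, coe_filter, mem_powerset, Set.mem_ofPred_eq]
  exact ⟨fun h => ⟨IsSecStr.subset_pairsOn h.1.1, h⟩, And.right⟩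

lemma satStemLoops_finite (n : ℕ) : (satStemLoops n).Finite := by
  rw [satStemLoops_eq_filter]
  exact finite_toSet _

lemma numSatStemLoop_eq_card (n : ℕ) :
    numSatStemLoop n =
      ((pairsOn n).powerset.filter fun S => IsSaturated n S ∧ IsStemLoop n S).card := by
  rw [numSatStemLoop, ← satStemLoops, satStemLoops_eq_filter, Set.ncard_coe_finset]

set_option maxRecDepth 10000 in
lemma numSatStemLoop_small :
    numSatStemLoop 3 = 1 ∧ numSatStemLoop 4 = 3 ∧ numSatStemLoop 5 = 5 ∧
      numSatStemLoop 6 = 7 := by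
  simp only [numSatStemLoop_eq_card]
  decide

/-- The possible `(a, m)` for the outermost pair `(a, a+m+1)` of a saturated stem-loop on `[1,n]`,
`n ≥ 7`. -/
def outerLoops (n : ℕ) : Finset (ℕ × ℕ) :=
  {(1, n - 2), (2, n - 3), (3, n - 4), (1, n - 3), (1, n - 4)}

lemma satStemLoops_eq_biUnion (hn : 7 ≤ n) :
    satStemLoops n =
      ⋃ am ∈ (outerLoops n : Set (ℕ × ℕ)), enclose am.1 am.2 '' satStemLoops am.2 := by
  ext S
  simp only [satStemLoops, outerLoops, Set.mem_iUnion, Set.mem_image, Set.mem_ofPred_eq,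
    coe_insert, coe_singleton, Set.mem_insert_iff, Set.mem_singleton_iff, exists_prop,
    Prod.exists, Prod.mk.injEq]
  constructor
  · rintro ⟨hsat, hsl⟩
    obtain ⟨a, b, hab, hout⟩ := IsStemLoop.exists_outermost hsl
    obtain ⟨m, S, rfl, hS, rfl⟩ := IsSecStr.exists_eq_enclose hsat.1 hab hout
    have ha := hsat.1.1 _ hab
    obtain ⟨hsat, h3, hn3, h1⟩ := (isSaturated_enclose_iff hS ha).1 hsat
    have hne := IsSaturated.nonempty hsat (by simp only at ha; omega)
    refine ⟨a, m, by simp only at ha; omega, S,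
      ⟨hsat, (isStemLoop_enclose_iff hS hne ha).1 hsl⟩, rfl⟩
  · rintro ⟨a, m, ham, S, ⟨hsat, hsl⟩, rfl⟩
    have ha : IsPair n (a, a + m + 1) := by simp only [IsPair]; omega
    have hne := IsSaturated.nonempty hsat (by omega)
    exact ⟨(isSaturated_enclose_iff hsat.1 ha).2 ⟨hsat, by omega⟩,
      (isStemLoop_enclose_iff hsat.1 hne ha).2 hsl⟩

lemma numSatStemLoop_eq_sum (hn : 7 ≤ n) :
    numSatStemLoop n = ∑ am ∈ outerLoops n, numSatStemLoop am.2 := by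
  have hinj {a a' m m' : ℕ} {S S' : Finset (ℕ × ℕ)} (hS : S ∈ satStemLoops m)
      (hS' : S' ∈ satStemLoops m') :
      enclose a m S = enclose a' m' S' ↔ a = a' ∧ m = m' ∧ S = S' :=
    enclose_inj hS.1.1.1 hS'.1.1.1
  rw [numSatStemLoop, ← satStemLoops, satStemLoops_eq_biUnion hn,
    Set.Finite.ncard_biUnion (finite_toSet _) (fun am _ => (satStemLoops_finite am.2).image _),
    finsum_mem_coe_finset]
  · refine sum_congr rfl fun am _ => ?_
    exact Set.InjOn.ncard_image fun S hS S' hS' h => ((hinj hS hS').1 h).2.2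
  · rintro ⟨a, m⟩ - ⟨a', m'⟩ - hne
    refine Set.disjoint_left.2 ?_
    rintro _ ⟨S, hS, rfl⟩ ⟨S', hS', h⟩
    obtain ⟨rfl, rfl, -⟩ := (hinj hS' hS).1 h
    exact hne rfl

lemma sum_outerLoops (hn : 7 ≤ n) (f : ℕ → ℕ) :
    ∑ am ∈ outerLoops n, f am.2 = f (n - 2) + 2 * f (n - 3) + 2 * f (n - 4) := by
  rw [outerLoops, sum_insert, sum_insert, sum_insert, sum_insert, sum_singleton]
  · ring
  all_goals simp only [mem_insert, mem_singleton, Prod.mk.injEq]; omega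

end SecStr

/-- The number `c(n)` of saturated stem-loops satisfies `c(3) = 1`, `c(4) = 3`,
`c(5) = 5`, `c(6) = 7`, and `c(n) = c(n−2) + 2c(n−3) + 2c(n−4)` for all `n ≥ 7`. -/
theorem sat_stem_loop_recurrence :
    numSatStemLoop 3 = 1 ∧ numSatStemLoop 4 = 3 ∧ numSatStemLoop 5 = 5 ∧
    numSatStemLoop 6 = 7 ∧
    ∀ n : ℕ, 7 ≤ n →
      numSatStemLoop n
        = numSatStemLoop (n - 2) + 2 * numSatStemLoop (n - 3)
          + 2 * numSatStemLoop (n - 4) := by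
  obtain ⟨h3, h4, h5, h6⟩ := SecStr.numSatStemLoop_small
  exact ⟨h3, h4, h5, h6, fun n hn => by
    rw [SecStr.numSatStemLoop_eq_sum hn, SecStr.sum_outerLoops hn]⟩
end
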